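/- Let f : {0,1}^k → {0,1}^k, let 𝒮 = (S_1, …, S_k) be size-s subsets of [k], and suppose val(𝒢_𝒮) < 1. Then val(𝒢_𝒮^{⊗n}) ≤ (1 − 2^{−k})^n for all n; in particular, val(𝒢_𝒮^{⊗n}) decays exponentially in n. -/

import Mathlib

/-! If `val(𝒢_𝒮) < 1`, some player `j` cannot compute its answer from its view: there are
inputs `u`, `v` that agree on `S j` with `f u j ≠ f v j`. In the repeated game, replacing every
column equal to `v` by `u` is injective on the winning inputs: at a coordinate where two winning
inputs have columns `u` and `v`, player `j` has the same view in both, hence gives the same answer,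
while `f` demands different ones. So at most `(2^k - 1)^n` of the `2^(nk)` inputs are won. -/

/-- `f^{⊗n}` applies `f` in place to each row `(x_{i1}, …, x_{ik})`, `i ∈ [n]`. -/
def tensor (n : ℕ) {k : ℕ} (f : (Fin k → Bool) → Fin k → Bool) :
    (Fin k → Fin n → Bool) → Fin k → Fin n → Bool :=
  fun x j i => f (fun j' => x j' i) j

/-- Value of the game `𝒢_𝒮`. -/
noncomputable def gameVal (k : ℕ) (f : (Fin k → Bool) → Fin k → Bool)
    (S : Fin k → Finset (Fin k)) : ℝ :=
  sSup {p : ℝ | ∃ g : Fin k → (Fin k → Bool) → Bool,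
    (∀ j x y, (∀ j' ∈ S j, x j' = y j') → g j x = g j y) ∧
    p = (Nat.card {x : Fin k → Bool // f x = fun j => g j x} : ℝ) / 2 ^ k}

/-- Value of the `n`-fold repeated game `𝒢_𝒮^{⊗n}`. -/
noncomputable def gameValN (n k : ℕ) (f : (Fin k → Bool) → Fin k → Bool)
    (S : Fin k → Finset (Fin k)) : ℝ :=
  sSup {p : ℝ | ∃ g : Fin k → (Fin k → Fin n → Bool) → Fin n → Bool,
    (∀ j x y, (∀ j' ∈ S j, x j' = y j') → g j x = g j y) ∧
    p = (Nat.card {x : Fin k → Fin n → Bool // tensor n f x = fun j => g j x} : ℝ)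
          / 2 ^ (n * k)}

open Function

lemma one_le_gameVal {k : ℕ} {f : (Fin k → Bool) → Fin k → Bool} {S : Fin k → Finset (Fin k)}
    (hdet : ∀ j u v, (∀ j' ∈ S j, u j' = v j') → f u j = f v j) : 1 ≤ gameVal k f S := by
  refine le_csSup ⟨1, ?_⟩ ⟨fun j x => f x j, hdet, ?_⟩
  · rintro p ⟨g, -, rfl⟩
    rw [div_le_one (by positivity)]
    exact_mod_cast (Finite.card_subtype_le _).trans_eq (by simp)
  · simp

lemma exists_undetermined_of_gameVal_lt_one {k : ℕ} {f : (Fin k → Bool) → Fin k → Bool}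
    {S : Fin k → Finset (Fin k)} (hval : gameVal k f S < 1) :
    ∃ j u v, (∀ j' ∈ S j, u j' = v j') ∧ f u j ≠ f v j := by
  by_contra! hdet
  exact hval.not_ge (one_le_gameVal hdet)

section Collapse

variable {α : Type*} [DecidableEq α] {u v a b : α}

lemma update_id_ne (huv : u ≠ v) (a : α) : update id v u a ≠ v := by
  by_cases ha : a = v <;> simp [ha, huv]

lemma update_id_eq_update_id (huv : u ≠ v) :
    update id v u a = update id v u b ↔ a = b ∨ a = u ∧ b = v ∨ a = v ∧ b = u := by
  by_cases ha : a = v <;> by_cases hb : b = v <;> simp [ha, hb]; aesop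

lemma card_le_of_injective_update_id {ι W : Type*} [Fintype α] [Fintype ι] (huv : u ≠ v)
    (e : W → ι → α) (he : Injective fun w i => update id v u (e w i)) :
    Nat.card W ≤ (Fintype.card α - 1) ^ Fintype.card ι := by
  let Φ : W → ι → {c // c ≠ v} := fun w i => ⟨update id v u (e w i), update_id_ne huv _⟩
  have hΦ : Injective Φ := fun w w' h => he (funext fun i => congrArg Subtype.val (congrFun h i))
  have hcard := Nat.card_le_card_of_injective Φ hΦ
  rwa [Nat.card_fun, Nat.card_eq_fintype_card (α := {c // c ≠ v}),
    Nat.card_eq_fintype_card (α := ι), Fintype.card_subtype_compl, Fintype.card_subtype_eq] at hcard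

end Collapse

lemma injective_update_id_swap_of_wins {n k : ℕ} {f : (Fin k → Bool) → Fin k → Bool}
    {S : Fin k → Finset (Fin k)} {g : Fin k → (Fin k → Fin n → Bool) → Fin n → Bool}
    (hg : ∀ j x y, (∀ j' ∈ S j, x j' = y j') → g j x = g j y) {j : Fin k} {u v : Fin k → Bool}
    (huv : ∀ j' ∈ S j, u j' = v j') (hf : f u j ≠ f v j) :
    Injective fun (x : {x : Fin k → Fin n → Bool // tensor n f x = fun j => g j x}) i =>
      update id v u (swap x.1 i) := by
  have hne : u ≠ v := ne_of_apply_ne (f · j) hf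
  rintro ⟨x, hx⟩ ⟨y, hy⟩ hxy
  have hcol i := (update_id_eq_update_id hne).1 (congrFun hxy i)
  have hview : g j x = g j y := by
    refine hg j x y fun j' hj' => funext fun i => ?_
    rcases hcol i with h | ⟨hxi, hyi⟩ | ⟨hxi, hyi⟩
    · exact congrFun h j'
    · simpa [← hxi, ← hyi] using huv j' hj'
    · simpa [← hxi, ← hyi] using (huv j' hj').symm
  have hans i : f (swap x i) j = f (swap y i) j := by
    have hxi := congrFun (congrFun hx j) i
    have hyi := congrFun (congrFun hy j) i
    simp only [tensor] at hxi hyi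
    exact (hxi.trans (congrFun hview i)).trans hyi.symm
  refine Subtype.ext (funext fun j' => funext fun i => congrFun (?_ : swap x i = swap y i) j')
  rcases hcol i with h | ⟨hxi, hyi⟩ | ⟨hxi, hyi⟩
  · exact h
  · exact absurd (hxi ▸ hyi ▸ hans i) hf
  · exact absurd (hxi ▸ hyi ▸ hans i).symm hf

lemma two_pow_sub_one_pow_div (n k : ℕ) :
    ((2 : ℝ) ^ k - 1) ^ n / 2 ^ (n * k) = (1 - (1 / 2 : ℝ) ^ k) ^ n := by
  rw [mul_comm, pow_mul, ← div_pow]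
  congr 1
  rw [div_eq_iff (by positivity), sub_mul, one_mul, one_div_pow, one_div_mul_cancel (by positivity)]

theorem stmt_12_general (k : ℕ) (f : (Fin k → Bool) → Fin k → Bool)
    (S : Fin k → Finset (Fin k))
    (hval : gameVal k f S < 1) :
    ∀ n : ℕ, gameValN n k f S ≤ (1 - (1 / 2 : ℝ) ^ k) ^ n := by
  intro n
  obtain ⟨j, u, v, huv, hf⟩ := exists_undetermined_of_gameVal_lt_one hval
  refine Real.sSup_le ?_ (pow_nonneg (sub_nonneg.2 (pow_le_one₀ (by norm_num) (by norm_num))) n)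
  rintro p ⟨g, hg, rfl⟩
  have hcard := card_le_of_injective_update_id (ne_of_apply_ne (f · j) hf) _
    (injective_update_id_swap_of_wins hg huv hf)
  rw [← two_pow_sub_one_pow_div]
  gcongr
  simpa [Nat.cast_sub Nat.one_le_two_pow] using (Nat.cast_le (α := ℝ)).2 hcard

theorem stmt_12 (k s : ℕ) (f : (Fin k → Bool) → Fin k → Bool)
    (S : Fin k → Finset (Fin k)) (hS : ∀ j, (S j).card = s)
    (hval : gameVal k f S < 1) :
    ∀ n : ℕ, gameValN n k f S ≤ (1 - (1 / 2 : ℝ) ^ k) ^ n :=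
  stmt_12_general k f S hval
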